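/- For N = 4, the Grover algorithm matrix U₄ satisfies U₄⁶ = I₄ and U₄^t ≠ I₄ for 1 ≤ t ≤ 5; hence the period of U₄ is 6. -/
import Mathlib


/-- The `4 × 4` Grover algorithm matrix `U₄`. -/
noncomputable def groverU4 : Matrix (Fin 4) (Fin 4) ℝ :=
  (1 / 2 : ℝ) • !![1, 1, 1, 1; -1, -1, 1, 1; -1, 1, -1, 1; -1, 1, 1, -1]

lemma groverU4_sq :
    groverU4 ^ 2 = (1 / 2 : ℝ) •
      !![-1, 1, 1, 1; -1, 1, -1, -1; -1, -1, 1, -1; -1, -1, -1, 1] := by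
  rw [sq]
  ext i j
  fin_cases i <;> fin_cases j <;>
    simp [groverU4, Matrix.mul_apply, Fin.sum_univ_four, Matrix.vecHead, Matrix.vecTail] <;>
    norm_num

lemma groverU4_cube : groverU4 ^ 3 = -1 := by
  rw [pow_succ, groverU4_sq]
  ext i j
  fin_cases i <;> fin_cases j <;>
    simp [groverU4, Matrix.mul_apply, Fin.sum_univ_four, Matrix.one_apply, Matrix.vecHead,
      Matrix.vecTail] <;>
    norm_num

/-- `U₄^6 = 1` and `U₄^t ≠ 1` for `1 ≤ t ≤ 5`; hence the period of `U₄` is `6`. -/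
theorem stmt_8 :
    groverU4 ^ 6 = 1 ∧ ∀ t : ℕ, 1 ≤ t → t ≤ 5 → groverU4 ^ t ≠ 1 := by
  have h6 : groverU4 ^ 6 = 1 := by
    rw [show (6:ℕ) = 3*2 from rfl, pow_mul, groverU4_cube]; simp
  refine ⟨h6, ?_⟩
  intro t ht1 ht5 h
  have h4 : groverU4 ^ 4 = -groverU4 := by
    rw [pow_succ, groverU4_cube]; simp
  have h5 : groverU4 ^ 5 = -(groverU4 ^ 2) := by
    rw [show (5:ℕ) = 3+2 from rfl, pow_add, groverU4_cube]; simp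
  interval_cases t
  · have h00 := congrFun (congrFun h 0) 0
    simp [groverU4, Matrix.one_apply, pow_one] at h00
  · rw [groverU4_sq] at h
    have h00 := congrFun (congrFun h 0) 0
    simp [Matrix.one_apply] at h00
    norm_num at h00
  · rw [groverU4_cube] at h
    have h00 := congrFun (congrFun h 0) 0
    simp [Matrix.one_apply] at h00
    norm_num at h00
  · rw [h4] at h
    have h00 := congrFun (congrFun h 0) 0
    simp [groverU4, Matrix.one_apply] at h00
    norm_num at h00
  · rw [h5, groverU4_sq] at h
    have h00 := congrFun (congrFun h 0) 0
    simp [Matrix.one_apply] at h00
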